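/- arXiv:math/0605771 — 3 statements merged into one kernel-verified Lean document; each statement's English description precedes it below -/
import Mathlib

section
/- Let D ⊆ ℝⁿ be open, f : D → ℝᵐ locally Lipschitz, p ∈ D, and for δ > 0 let S_δ := closure of the convex hull of {Df(x) : x ∈ (p + δB) ∩ Ω(f)}, where Ω(f) is the set of differentiability points of f and B the open unit ball. Then ∂ᴾf(p) := ⋂_{δ>0} S_δ is a nonempty, convex, compact subset of the space of m×n matrices. -/
open Filter Topology Pointwise

/-- `f` is locally Lipschitz on `D`. -/
def LocallyLipschitzOnSet {X Y : Type*} [NormedAddCommGroup X] [NormedSpace ℝ X]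
    [NormedAddCommGroup Y] [NormedSpace ℝ Y] (D : Set X) (f : X → Y) : Prop :=
  ∀ p ∈ D, ∃ K : NNReal, ∃ U ∈ 𝓝 p, LipschitzOnWith K f U

/-- The points of `D` where `f` is differentiable. -/
def diffPts {n m : ℕ} (D : Set (EuclideanSpace ℝ (Fin n)))
    (f : EuclideanSpace ℝ (Fin n) → EuclideanSpace ℝ (Fin m)) :
    Set (EuclideanSpace ℝ (Fin n)) :=
  {x | x ∈ D ∧ DifferentiableAt ℝ f x}

/-- Pourciau's generalized Jacobian. -/
noncomputable def pourciauJacobian {n m : ℕ} (D : Set (EuclideanSpace ℝ (Fin n)))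
    (f : EuclideanSpace ℝ (Fin n) → EuclideanSpace ℝ (Fin m))
    (p : EuclideanSpace ℝ (Fin n)) :
    Set (EuclideanSpace ℝ (Fin n) →L[ℝ] EuclideanSpace ℝ (Fin m)) :=
  ⋂ δ ∈ Set.Ioi (0 : ℝ),
    closure (convexHull ℝ (fderiv ℝ f '' (Metric.ball p δ ∩ diffPts D f)))

/-- Clarke's generalized Jacobian. -/
noncomputable def clarkeJacobian {n m : ℕ} (D : Set (EuclideanSpace ℝ (Fin n)))
    (f : EuclideanSpace ℝ (Fin n) → EuclideanSpace ℝ (Fin m))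
    (p : EuclideanSpace ℝ (Fin n)) :
    Set (EuclideanSpace ℝ (Fin n) →L[ℝ] EuclideanSpace ℝ (Fin m)) :=
  convexHull ℝ {A | ∃ u : ℕ → EuclideanSpace ℝ (Fin n),
    (∀ i, u i ∈ diffPts D f) ∧ Tendsto u atTop (𝓝 p) ∧
    Tendsto (fun i => fderiv ℝ f (u i)) atTop (𝓝 A)}

/-!
Near `p`, `f` is `K`-Lipschitz on a ball `B(p, r) ⊆ D`, so every derivative taken in that ball has
operator norm at most `K`, and `S_r` is compact. By Rademacher's theorem every ball `B(p, δ)` meets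
the differentiability points of `f`, so each `S_δ` is nonempty. The sets `S_δ` shrink as `δ ↓ 0`,
so Cantor's intersection theorem gives a nonempty compact intersection, convex as an intersection
of convex sets.
-/

open Set Metric

theorem Monotone.nonempty_biInter_Ioi {X : Type*} [TopologicalSpace X] {S : ℝ → Set X}
    (hS : Monotone S) (hne : ∀ δ > 0, (S δ).Nonempty) (hcl : ∀ δ > 0, IsClosed (S δ))
    {r : ℝ} (hr : 0 < r) (hc : IsCompact (S r)) : (⋂ δ ∈ Ioi 0, S δ).Nonempty := by
  have : Nonempty (Ioi (0 : ℝ)) := ⟨⟨r, hr⟩⟩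
  -- truncating at `r` makes every member a closed subset of the compact `S r`
  let T : Ioi (0 : ℝ) → Set X := fun δ => S (min δ r)
  have hpos (δ : Ioi (0 : ℝ)) : 0 < min (δ : ℝ) r := lt_min δ.2 hr
  have hT : Monotone T := fun a b hab => hS (min_le_min_right r hab)
  obtain ⟨A, hA⟩ := IsCompact.nonempty_iInter_of_directed_nonempty_isCompact_isClosed T
    hT.directed_ge (fun δ => hne _ (hpos δ))
    (fun δ => hc.of_isClosed_subset (hcl _ (hpos δ)) (hS (min_le_right _ r)))
    (fun δ => hcl _ (hpos δ))
  exact ⟨A, mem_iInter₂.2 fun δ hδ => hS (min_le_left δ r) (mem_iInter.1 hA ⟨δ, hδ⟩)⟩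

section Lipschitz

variable {E F : Type*} [NormedAddCommGroup E] [NormedSpace ℝ E] [FiniteDimensional ℝ E]
  [NormedAddCommGroup F] [NormedSpace ℝ F] [FiniteDimensional ℝ F]
  {f : E → F} {K : NNReal} {U : Set E}

theorem LipschitzOnWith.exists_differentiableAt_of_isOpen (hf : LipschitzOnWith K f U)
    (hU : IsOpen U) (hne : U.Nonempty) : ∃ x ∈ U, DifferentiableAt ℝ f x := by
  let _ : MeasurableSpace E := borel E
  have _ : BorelSpace E := ⟨rfl⟩
  have hae := hf.ae_differentiableWithinAt_of_mem (μ := (Module.Basis.ofVectorSpace ℝ E).addHaar)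
  obtain ⟨x, hxU, hx⟩ := (MeasureTheory.Measure.dense_of_ae hae).inter_open_nonempty U hU hne
  exact ⟨x, hxU, (hx hxU).differentiableAt (hU.mem_nhds hxU)⟩

theorem LipschitzOnWith.isCompact_closure_convexHull_fderiv_image (hf : LipschitzOnWith K f U)
    (hU : IsOpen U) {s : Set E} (hs : s ⊆ U) :
    IsCompact (closure (convexHull ℝ (fderiv ℝ f '' s))) := by
  have hbound : fderiv ℝ f '' s ⊆ closedBall 0 K := by
    rintro _ ⟨x, hx, rfl⟩
    simpa using norm_fderiv_le_of_lipschitzOn ℝ (hU.mem_nhds (hs hx)) hf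
  exact (isCompact_closedBall 0 (K : ℝ)).of_isClosed_subset isClosed_closure
    (closure_minimal ((convex_closedBall 0 _).convexHull_subset_iff.2 hbound) isClosed_closedBall)

end Lipschitz

section Pourciau

variable {n m : ℕ} {D : Set (EuclideanSpace ℝ (Fin n))}
  {f : EuclideanSpace ℝ (Fin n) → EuclideanSpace ℝ (Fin m)} {p : EuclideanSpace ℝ (Fin n)}

/-- The set `S_δ` of Pourciau's definition. -/
noncomputable def pourciauHull (D : Set (EuclideanSpace ℝ (Fin n)))
    (f : EuclideanSpace ℝ (Fin n) → EuclideanSpace ℝ (Fin m)) (p : EuclideanSpace ℝ (Fin n))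
    (δ : ℝ) : Set (EuclideanSpace ℝ (Fin n) →L[ℝ] EuclideanSpace ℝ (Fin m)) :=
  closure (convexHull ℝ (fderiv ℝ f '' (ball p δ ∩ diffPts D f)))

theorem pourciauJacobian_eq_biInter_pourciauHull :
    pourciauJacobian D f p = ⋂ δ ∈ Ioi 0, pourciauHull D f p δ := rfl

theorem pourciauHull_mono : Monotone (pourciauHull D f p) := fun _ _ h =>
  closure_mono (convexHull_mono (image_mono (inter_subset_inter_left _ (ball_subset_ball h))))

theorem isClosed_pourciauHull (δ : ℝ) : IsClosed (pourciauHull D f p δ) := isClosed_closure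

theorem convex_pourciauHull (δ : ℝ) : Convex ℝ (pourciauHull D f p δ) :=
  (convex_convexHull ℝ _).closure

theorem fderiv_mem_pourciauHull {x : EuclideanSpace ℝ (Fin n)} {δ : ℝ} (hxp : x ∈ ball p δ)
    (hxD : x ∈ D) (hfx : DifferentiableAt ℝ f x) : fderiv ℝ f x ∈ pourciauHull D f p δ :=
  subset_closure (subset_convexHull ℝ _ ⟨x, ⟨hxp, hxD, hfx⟩, rfl⟩)

end Pourciau

/-- Pourciau's generalized Jacobian is nonempty, convex and compact. -/
theorem pourciauJacobian_nonempty_convex_compact {n m : ℕ}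
    (D : Set (EuclideanSpace ℝ (Fin n))) (hD : IsOpen D)
    (f : EuclideanSpace ℝ (Fin n) → EuclideanSpace ℝ (Fin m))
    (hf : LocallyLipschitzOnSet D f) (p : EuclideanSpace ℝ (Fin n)) (hp : p ∈ D) :
    (pourciauJacobian D f p).Nonempty ∧ Convex ℝ (pourciauJacobian D f p) ∧
      IsCompact (pourciauJacobian D f p) := by
  obtain ⟨K, U, hU, hK⟩ := hf p hp
  obtain ⟨r, hr, hball⟩ := Metric.mem_nhds_iff.1 (Filter.inter_mem hU (hD.mem_nhds hp))
  have hlip : LipschitzOnWith K f (ball p r) := hK.mono (hball.trans inter_subset_left)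
  have hne : ∀ δ > 0, (pourciauHull D f p δ).Nonempty := by
    intro δ hδ
    have hsub : ball p (min δ r) ⊆ ball p r := ball_subset_ball (min_le_right δ r)
    obtain ⟨x, hx, hfx⟩ := (hlip.mono hsub).exists_differentiableAt_of_isOpen isOpen_ball
      (nonempty_ball.2 (lt_min hδ hr))
    exact ⟨_, fderiv_mem_pourciauHull (ball_subset_ball (min_le_left δ r) hx)
      (hball (hsub hx)).2 hfx⟩
  have hc : IsCompact (pourciauHull D f p r) :=
    hlip.isCompact_closure_convexHull_fderiv_image isOpen_ball inter_subset_left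
  rw [pourciauJacobian_eq_biInter_pourciauHull]
  exact ⟨pourciauHull_mono.nonempty_biInter_Ioi hne (fun δ _ => isClosed_pourciauHull δ) hr hc,
    convex_iInter₂ fun δ _ => convex_pourciauHull δ,
    hc.of_isClosed_subset (isClosed_biInter fun δ _ => isClosed_pourciauHull δ)
      (biInter_subset_of_mem hr)⟩
end

section
/- Let D ⊆ ℝⁿ be open, f : D → ℝᵐ locally Lipschitz, p ∈ D. Then the Pourciau generalized Jacobian ∂ᴾf(p) := ⋂_{δ>0} co̅{Df(x) : x ∈ (p+δB)∩Ω(f)} equals Clarke's generalized Jacobian ∂f(p) := co{A : ∃ xᵢ ∈ Ω(f), xᵢ → p, Df(xᵢ) → A}. -/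
open Filter Topology Pointwise

/-!
Let `L` be the set of limits of `Df(xᵢ)` along sequences `xᵢ → p` in `Ω(f)`. It is the set of
cluster values `⋂_δ closure (Df((p + δB) ∩ Ω(f)))`, hence closed, and it is bounded because `Df`
is bounded by a local Lipschitz constant of `f`; so `L` is compact, and by Carathéodory so is
`co L`. Every `co̅ Df((p + δB) ∩ Ω(f))` contains `L`, which gives one inclusion. Conversely, by
compactness `Df((p + δB) ∩ Ω(f))` lies in the `ε`-neighbourhood of `L` once `δ` is small, so the
Pourciau Jacobian lies in the closed convex `ε`-neighbourhood of `co L` for every `ε > 0`, hence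
in the closed set `co L`.
-/

open Set Metric Bornology

section

variable {E : Type*} [NormedAddCommGroup E] [NormedSpace ℝ E] [FiniteDimensional ℝ E]

theorem convexHull_eq_image_stdSimplex_prod_pi {s : Set E} (hs : s.Nonempty) :
    convexHull ℝ s =
      (fun q : (Fin (Module.finrank ℝ E + 1) → ℝ) × (Fin (Module.finrank ℝ E + 1) → E) =>
        ∑ i, q.1 i • q.2 i) '' (stdSimplex ℝ _ ×ˢ univ.pi fun _ => s) := by
  obtain ⟨s₀, hs₀⟩ := hs
  apply Subset.antisymm
  · intro x hx
    obtain ⟨ι, _, z, w, hzs, hz, hw₀, hw₁, rfl⟩ := eq_pos_convex_span_of_mem_convexHull hx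
    have hcard : Fintype.card ι ≤ Module.finrank ℝ E + 1 :=
      hz.card_le_finrank_succ.trans (by gcongr; exact Submodule.finrank_le _)
    let e : ι ↪ Fin (Module.finrank ℝ E + 1) :=
      (Fintype.equivFin ι).toEmbedding.trans (Fin.castLEEmb hcard)
    have hw_off : ∀ i ∉ range e, Function.extend e w 0 i = 0 := fun i hi =>
      Function.extend_apply' _ _ _ hi
    refine ⟨(Function.extend e w 0, Function.extend e z fun _ => s₀),
      ⟨⟨fun i => ?_, ?_⟩, fun i _ => ?_⟩, ?_⟩
    · by_cases hi : i ∈ range e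
      · obtain ⟨j, rfl⟩ := hi
        simpa [e.injective.extend_apply] using (hw₀ j).le
      · exact (hw_off i hi).ge
    · rw [← hw₁]
      exact (Fintype.sum_of_injective e e.injective _ _ hw_off
        fun j => (e.injective.extend_apply _ _ j).symm).symm
    · by_cases hi : i ∈ range e
      · obtain ⟨j, rfl⟩ := hi
        simpa [e.injective.extend_apply] using hzs (mem_range_self j)
      · simpa [Function.extend_apply' _ _ _ hi] using hs₀
    · refine (Fintype.sum_of_injective e e.injective _ _ (fun i hi => ?_) fun j => ?_).symm
      · simp [hw_off i hi]
      · simp [e.injective.extend_apply]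
  · rintro _ ⟨q, ⟨hw, hz⟩, rfl⟩
    exact mem_convexHull_of_exists_fintype q.1 q.2 hw.1 hw.2 (fun i => hz i (mem_univ i)) rfl

theorem IsCompact.convexHull {s : Set E} (hs : IsCompact s) : IsCompact (convexHull ℝ s) := by
  rcases s.eq_empty_or_nonempty with rfl | hne
  · simp
  rw [convexHull_eq_image_stdSimplex_prod_pi hne]
  exact ((isCompact_stdSimplex ℝ _).prod (isCompact_univ_pi fun _ => hs)).image <| by fun_prop

end

section SeqLimitValues

variable {X Y : Type*} [PseudoMetricSpace X] [PseudoMetricSpace Y] (g : X → Y) (T : Set X) (p : X)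

def seqLimitValues : Set Y :=
  {A | ∃ u : ℕ → X, (∀ i, u i ∈ T) ∧ Tendsto u atTop (𝓝 p) ∧
    Tendsto (fun i => g (u i)) atTop (𝓝 A)}

variable {g T p}

theorem mem_seqLimitValues_iff_frequently {A : Y} :
    A ∈ seqLimitValues g T p ↔ ∃ᶠ x in 𝓝 p ⊓ comap g (𝓝 A), x ∈ T := by
  simp only [frequently_iff_seq_forall, tendsto_inf, tendsto_comap_iff, seqLimitValues,
    mem_ofPred_eq, Function.comp_def]
  grind

theorem seqLimitValues_eq_iInter_closure :
    seqLimitValues g T p = ⋂ δ ∈ Ioi (0 : ℝ), closure (g '' (ball p δ ∩ T)) := by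
  ext A
  simp only [mem_seqLimitValues_iff_frequently,
    (nhds_basis_ball.inf (nhds_basis_ball.comap g)).frequently_iff, mem_iInter,
    Metric.mem_closure_iff, mem_Ioi, exists_mem_image, Prod.forall, mem_inter_iff,
    mem_preimage, mem_ball, dist_comm A]
  grind

theorem isClosed_seqLimitValues : IsClosed (seqLimitValues g T p) := by
  rw [seqLimitValues_eq_iInter_closure]
  exact isClosed_biInter fun _ _ => isClosed_closure

variable [ProperSpace Y] {r : ℝ}

theorem isCompact_seqLimitValues (hr : 0 < r) (hg : IsBounded (g '' (ball p r ∩ T))) :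
    IsCompact (seqLimitValues g T p) := by
  refine hg.isCompact_closure.of_isClosed_subset isClosed_seqLimitValues ?_
  rw [seqLimitValues_eq_iInter_closure]
  exact biInter_subset_of_mem (mem_Ioi.2 hr)

theorem exists_mem_seqLimitValues_of_tendsto (hr : 0 < r)
    (hg : IsBounded (g '' (ball p r ∩ T))) {u : ℕ → X} (huT : ∀ i, u i ∈ T)
    (hu : Tendsto u atTop (𝓝 p)) :
    ∃ A ∈ seqLimitValues g T p, ∃ φ : ℕ → ℕ, StrictMono φ ∧
      Tendsto (fun i => g (u (φ i))) atTop (𝓝 A) := by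
  have hfreq : ∃ᶠ i in atTop, g (u i) ∈ g '' (ball p r ∩ T) :=
    (hu.eventually (ball_mem_nhds p hr)).frequently.mono fun i hi => ⟨u i, ⟨hi, huT i⟩, rfl⟩
  obtain ⟨A, -, φ, hφ, hA⟩ := tendsto_subseq_of_frequently_bounded hg hfreq
  exact ⟨A, ⟨u ∘ φ, fun i => huT (φ i), hu.comp hφ.tendsto_atTop, hA⟩, φ, hφ, hA⟩

theorem exists_image_ball_subset_thickening_seqLimitValues (hr : 0 < r)
    (hg : IsBounded (g '' (ball p r ∩ T))) {ε : ℝ} (hε : 0 < ε) :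
    ∃ δ > 0, g '' (ball p δ ∩ T) ⊆ thickening ε (seqLimitValues g T p) := by
  by_contra! h
  have hfreq : ∃ᶠ x in 𝓝 p, x ∈ T ∧ g x ∉ thickening ε (seqLimitValues g T p) := by
    refine (nhds_basis_ball.frequently_iff).2 fun δ hδ => ?_
    obtain ⟨_, ⟨x, hx, rfl⟩, hout⟩ := not_subset.1 (h δ hδ)
    exact ⟨x, hx.1, hx.2, hout⟩
  obtain ⟨u, hu, huT⟩ := exists_seq_forall_of_frequently hfreq
  obtain ⟨A, hA, φ, -, hφ⟩ :=
    exists_mem_seqLimitValues_of_tendsto hr hg (fun i => (huT i).1) hu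
  obtain ⟨i, hi⟩ := (hφ.eventually (ball_mem_nhds A hε)).exists
  exact (huT (φ i)).2 (mem_thickening_iff.2 ⟨A, hA, hi⟩)

end SeqLimitValues

theorem iInter_closure_convexHull_image_ball_eq_convexHull_seqLimitValues {X Y : Type*}
    [PseudoMetricSpace X] [NormedAddCommGroup Y] [NormedSpace ℝ Y] [FiniteDimensional ℝ Y]
    {g : X → Y} {T : Set X} {p : X} {r : ℝ} (hr : 0 < r)
    (hg : IsBounded (g '' (ball p r ∩ T))) :
    ⋂ δ ∈ Ioi (0 : ℝ), closure (convexHull ℝ (g '' (ball p δ ∩ T))) =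
      convexHull ℝ (seqLimitValues g T p) := by
  apply Subset.antisymm
  · intro A hA
    rw [← (isCompact_seqLimitValues hr hg).convexHull.isClosed.closure_eq,
      closure_eq_iInter_cthickening, mem_iInter₂]
    intro ε hε
    obtain ⟨δ, hδ, hsub⟩ := exists_image_ball_subset_thickening_seqLimitValues hr hg hε
    have hnbhd : g '' (ball p δ ∩ T) ⊆ cthickening ε (convexHull ℝ (seqLimitValues g T p)) :=
      hsub.trans <| (thickening_subset_of_subset ε (subset_convexHull ℝ _)).trans <|
        thickening_subset_cthickening ε _
    exact closure_minimal (convexHull_min hnbhd ((convex_convexHull ℝ _).cthickening ε))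
      isClosed_cthickening (mem_iInter₂.1 hA δ hδ)
  · refine subset_iInter₂ fun δ hδ => convexHull_min ?_ (convex_convexHull ℝ _).closure
    rw [seqLimitValues_eq_iInter_closure]
    exact (biInter_subset_of_mem hδ).trans (closure_mono (subset_convexHull ℝ _))

theorem pourciauJacobian_eq_clarkeJacobian_general {n m : ℕ}
    (D : Set (EuclideanSpace ℝ (Fin n)))
    (f : EuclideanSpace ℝ (Fin n) → EuclideanSpace ℝ (Fin m))
    (hf : LocallyLipschitzOnSet D f) (p : EuclideanSpace ℝ (Fin n)) (hp : p ∈ D) :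
    pourciauJacobian D f p = clarkeJacobian D f p := by
  obtain ⟨K, U, hU, hlip⟩ := hf p hp
  obtain ⟨r, hr, hrU⟩ := Metric.mem_nhds_iff.1 hU
  -- both Jacobians unfold to the general statement with `g = fderiv ℝ f`, `T = diffPts D f`
  refine iInter_closure_convexHull_image_ball_eq_convexHull_seqLimitValues hr
    ((isBounded_closedBall (x := 0) (r := (K : ℝ))).subset ?_)
  rintro _ ⟨x, hx, rfl⟩
  exact mem_closedBall_zero_iff.2 <|
    norm_fderiv_le_of_lipschitzOn ℝ (mem_of_superset (isOpen_ball.mem_nhds hx.1) hrU) hlip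

/-- Pourciau's and Clarke's generalized Jacobians coincide. -/
theorem pourciauJacobian_eq_clarkeJacobian {n m : ℕ}
    (D : Set (EuclideanSpace ℝ (Fin n))) (hD : IsOpen D)
    (f : EuclideanSpace ℝ (Fin n) → EuclideanSpace ℝ (Fin m))
    (hf : LocallyLipschitzOnSet D f) (p : EuclideanSpace ℝ (Fin n)) (hp : p ∈ D) :
    pourciauJacobian D f p = clarkeJacobian D f p :=
  pourciauJacobian_eq_clarkeJacobian_general D f hf p hp
end

section
/- Let D ⊆ ℝⁿ be open and convex, f : D → ℝᵐ locally Lipschitz, and a, b ∈ D. Then f(b) − f(a) ∈ co̅{A(b−a) : A ∈ ∂f(x), x ∈ [a,b]}, where [a,b] is the segment from a to b. -/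
/-!
Separating `f b - f a` from the closed convex set by a linear functional `ℓ` reduces the claim
to finding `x ∈ [a, b]` and a limit `A` of Jacobians at `x` with `ℓ (f b - f a) ≤ ℓ (A (b - a))`.
By Rademacher's theorem and Fubini, for almost every small shift `v` the map `f` is
differentiable at almost every point of the segment `[a + v, b + v]`; along it
`t ↦ ℓ (f (a + v + t • (b - a)))` is Lipschitz, so by the fundamental theorem of calculus its
increment is at most its derivative at one of these points. Letting `v → 0`, the Jacobians at
these points stay bounded, and a convergent subsequence yields `A`.
-/

open Filter Topology Pointwise

open MeasureTheory Metric Set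

theorem LocallyLipschitzOnSet.locallyLipschitzOn {X Y : Type*} [NormedAddCommGroup X]
    [NormedSpace ℝ X] [NormedAddCommGroup Y] [NormedSpace ℝ Y] {D : Set X} {f : X → Y}
    (hf : LocallyLipschitzOnSet D f) : LocallyLipschitzOn D f := fun p hp => by
  obtain ⟨K, U, hU, hKU⟩ := hf p hp
  exact ⟨K, U, mem_nhdsWithin_of_mem_nhds hU, hKU⟩

theorem LocallyLipschitzOnSet.exists_lipschitzOnWith_cthickening {X Y : Type*}
    [NormedAddCommGroup X] [NormedSpace ℝ X] [ProperSpace X] [NormedAddCommGroup Y]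
    [NormedSpace ℝ Y] {D s : Set X} {f : X → Y} (hf : LocallyLipschitzOnSet D f) (hD : IsOpen D)
    (hs : IsCompact s) (hsD : s ⊆ D) :
    ∃ δ > 0, cthickening δ s ⊆ D ∧ ∃ K, LipschitzOnWith K f (cthickening δ s) := by
  obtain ⟨δ, hδ, hδD⟩ := hs.exists_cthickening_subset_open hD hsD
  exact ⟨δ, hδ, hδD,
    (hf.locallyLipschitzOn.mono hδD).exists_lipschitzOnWith_of_compact hs.cthickening⟩

theorem ae_ae_add_smul_of_ae {E : Type*} [NormedAddCommGroup E] [NormedSpace ℝ E]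
    [MeasurableSpace E] [BorelSpace E] [SecondCountableTopology E] {μ : Measure E} [SFinite μ]
    [μ.IsAddRightInvariant] {p : E → Prop} (hp : ∀ᵐ x ∂μ, p x) (w : E) :
    ∀ᵐ v ∂μ, ∀ᵐ t : ℝ, p (v + t • w) := by
  obtain ⟨G, hG, hGmeas, hGp⟩ := hp.exists_measurable_mem
  set S : Set (E × ℝ) := (fun z => z.1 + z.2 • w) ⁻¹' Gᶜ
  have hS : MeasurableSet S :=
    (by fun_prop : Measurable fun z : E × ℝ => z.1 + z.2 • w) hGmeas.compl
  have hSnull : μ.prod volume S = 0 := by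
    rw [Measure.prod_apply_symm hS]
    have hslice (t : ℝ) : μ ((fun v => (v, t)) ⁻¹' S) = 0 := by
      change μ ((fun v => v + t • w) ⁻¹' Gᶜ) = 0
      rw [measure_preimage_add_right]
      exact hG
    simp [hslice]
  filter_upwards [Measure.ae_ae_of_ae_prod (measure_eq_zero_iff_ae_notMem.mp hSnull)] with v hv
  filter_upwards [hv] with t ht
  exact hGp _ (not_not.mp ht)

theorem LipschitzOnWith.exists_sub_le_mul_deriv {h : ℝ → ℝ} {K : NNReal} {a b : ℝ} (hab : a < b)
    (hh : LipschitzOnWith K h (Icc a b)) {p : ℝ → Prop}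
    (hp : ∀ᵐ t ∂volume.restrict (Ioc a b), p t) :
    ∃ t ∈ Ioc a b, p t ∧ h b - h a ≤ (b - a) * deriv h t := by
  have hac : AbsolutelyContinuousOnInterval h a b :=
    LipschitzOnWith.absolutelyContinuousOnInterval (by rwa [uIcc_of_le hab.le])
  have hμ : volume.restrict (Ioc a b) ≠ 0 := by simp [hab]
  have hN : volume.restrict (Ioc a b) {t | ¬ (t ∈ Ioc a b ∧ p t)} = 0 := by
    rw [← ae_iff]
    filter_upwards [hp, ae_restrict_mem measurableSet_Ioc] with t ht hmem using ⟨hmem, ht⟩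
  obtain ⟨t, htN, ht⟩ := exists_notMem_null_average_le hμ hac.intervalIntegrable_deriv.1 hN
  have havg : ⨍ s in Ioc a b, deriv h s = (b - a)⁻¹ * (h b - h a) := by
    rw [setAverage_eq, ← intervalIntegral.integral_of_le hab.le, hac.integral_deriv_eq_sub,
      Real.volume_real_Ioc_of_le hab.le, smul_eq_mul]
  rw [havg, inv_mul_le_iff₀ (sub_pos.mpr hab)] at ht
  obtain ⟨htI, htp⟩ := not_not.mp htN
  exact ⟨t, htI, htp, ht⟩

section Segment

variable {E F : Type*} [NormedAddCommGroup E] [NormedSpace ℝ E] [NormedAddCommGroup F]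
  [NormedSpace ℝ F]

theorem LipschitzOnWith.exists_dual_sub_le_fderiv {f : E → F} {K : NNReal} {p w : E}
    (hf : LipschitzOnWith K f (segment ℝ p (p + w))) (ℓ : F →L[ℝ] ℝ)
    (hdiff : ∀ᵐ t ∂volume.restrict (Ioc (0 : ℝ) 1), DifferentiableAt ℝ f (p + t • w)) :
    ∃ t ∈ Icc (0 : ℝ) 1, DifferentiableAt ℝ f (p + t • w) ∧
      ℓ (f (p + w) - f p) ≤ ℓ (fderiv ℝ f (p + t • w) w) := by
  have hline : LipschitzWith ‖w‖₊ (fun t : ℝ => p + t • w) :=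
    LipschitzWith.of_dist_le_mul fun s t => by
      simp [dist_eq_norm, ← sub_smul, norm_smul, mul_comm]
  have hmaps : MapsTo (fun t : ℝ => p + t • w) (Icc 0 1) (segment ℝ p (p + w)) := by
    rw [segment_eq_image', add_sub_cancel_left]
    exact mapsTo_image _ _
  have hlip := ℓ.lipschitz.comp_lipschitzOnWith (hf.comp hline.lipschitzOnWith hmaps)
  obtain ⟨t, ht, htdiff, hle⟩ := hlip.exists_sub_le_mul_deriv zero_lt_one hdiff
  refine ⟨t, Ioc_subset_Icc_self ht, htdiff, ?_⟩
  have hderiv :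
      HasDerivAt (ℓ ∘ f ∘ fun t : ℝ => p + t • w) (ℓ (fderiv ℝ f (p + t • w) w)) t := by
    have := ((hasDerivAt_id t).smul_const w).const_add p
    rw [one_smul] at this
    exact ℓ.hasFDerivAt.comp_hasDerivAt t (htdiff.hasFDerivAt.comp_hasDerivAt t this)
  simpa [hderiv.deriv] using hle

theorem add_smul_mem_thickening_segment {a b v : E} {ρ : ℝ} (hv : v ∈ ball a ρ) {t : ℝ}
    (ht : t ∈ Icc (0 : ℝ) 1) : v + t • (b - a) ∈ thickening ρ (segment ℝ a b) := by
  refine mem_thickening_iff.mpr ⟨a + t • (b - a), ?_, ?_⟩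
  · rw [segment_eq_image']
    exact mem_image_of_mem _ ht
  · simpa [dist_eq_norm] using hv

variable [FiniteDimensional ℝ E] [FiniteDimensional ℝ F]

theorem LipschitzOnWith.ae_differentiableAt_of_isOpen [MeasurableSpace E] [BorelSpace E]
    {μ : Measure E} [μ.IsAddHaarMeasure] {f : E → F} {K : NNReal} {s : Set E}
    (hf : LipschitzOnWith K f s) (hs : IsOpen s) : ∀ᵐ x ∂μ, x ∈ s → DifferentiableAt ℝ f x := by
  filter_upwards [hf.ae_differentiableWithinAt_of_mem] with x hx hxs
  exact (hx hxs).differentiableAt (hs.mem_nhds hxs)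

theorem LipschitzOnWith.exists_shifted_dual_sub_le_fderiv [MeasureSpace E] [BorelSpace E]
    [(volume : Measure E).IsAddHaarMeasure] {f : E → F} {K : NNReal} {a b : E} {ρ : ℝ}
    (hf : LipschitzOnWith K f (thickening ρ (segment ℝ a b))) (hρ : 0 < ρ) (ℓ : F →L[ℝ] ℝ) :
    ∃ v ∈ ball a ρ, ∃ t ∈ Icc (0 : ℝ) 1, DifferentiableAt ℝ f (v + t • (b - a)) ∧
      ℓ (f (v + (b - a)) - f v) ≤ ℓ (fderiv ℝ f (v + t • (b - a)) (b - a)) := by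
  have hshift := ae_ae_add_smul_of_ae
    (hf.ae_differentiableAt_of_isOpen (μ := volume) isOpen_thickening) (b - a)
  obtain ⟨v, hv, hvdiff⟩ := Measure.exists_mem_of_measure_ne_zero_of_ae
    (measure_ball_pos volume a hρ).ne' (ae_restrict_of_ae hshift)
  have hdiff : ∀ᵐ t ∂volume.restrict (Ioc (0 : ℝ) 1), DifferentiableAt ℝ f (v + t • (b - a)) := by
    filter_upwards [ae_restrict_of_ae hvdiff, ae_restrict_mem measurableSet_Ioc] with t ht htI
    exact ht (add_smul_mem_thickening_segment hv (Ioc_subset_Icc_self htI))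
  have hseg : segment ℝ v (v + (b - a)) ⊆ thickening ρ (segment ℝ a b) := by
    rw [segment_eq_image', add_sub_cancel_left]
    rintro _ ⟨t, ht, rfl⟩
    exact add_smul_mem_thickening_segment hv ht
  exact ⟨v, hv, (hf.mono hseg).exists_dual_sub_le_fderiv ℓ hdiff⟩

end Segment

theorem exists_mem_clarkeJacobian_dual_sub_le {n m : ℕ} {D : Set (EuclideanSpace ℝ (Fin n))}
    {f : EuclideanSpace ℝ (Fin n) → EuclideanSpace ℝ (Fin m)} {a b : EuclideanSpace ℝ (Fin n)}
    (hD : IsOpen D) (hDconv : Convex ℝ D) (hf : LocallyLipschitzOnSet D f) (ha : a ∈ D)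
    (hb : b ∈ D) (ℓ : EuclideanSpace ℝ (Fin m) →L[ℝ] ℝ) :
    ∃ x ∈ segment ℝ a b, ∃ A ∈ clarkeJacobian D f x, ℓ (f b - f a) ≤ ℓ (A (b - a)) := by
  have hs : IsCompact (segment ℝ a b) := by
    rw [segment_eq_image']
    exact isCompact_Icc.image (by fun_prop)
  obtain ⟨δ, hδ, hTD, K, hK⟩ :=
    hf.exists_lipschitzOnWith_cthickening hD hs (hDconv.segment_subset ha hb)
  have hT {y} (hy : y ∈ thickening δ (segment ℝ a b)) : cthickening δ (segment ℝ a b) ∈ 𝓝 y :=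
    mem_of_superset (isOpen_thickening.mem_nhds hy) (thickening_subset_cthickening _ _)
  choose v hv t ht hdiff hle using fun j : ℕ =>
    (hK.mono (thickening_subset_cthickening_of_le (min_le_left δ (1 / (j + 1))) _)
      ).exists_shifted_dual_sub_le_fderiv (lt_min hδ (by positivity)) ℓ
  set x := fun j => v j + t j • (b - a)
  have hxT (j : ℕ) : cthickening δ (segment ℝ a b) ∈ 𝓝 (x j) :=
    hT (thickening_mono (min_le_left _ _) _ (add_smul_mem_thickening_segment (hv j) (ht j)))
  obtain ⟨⟨t₀, A⟩, ht₀A, φ, hφ, hlim⟩ :=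
    (isCompact_Icc.prod (isCompact_closedBall 0 K)).tendsto_subseq
      (x := fun j => (t j, fderiv ℝ f (x j))) fun j =>
        ⟨ht j, mem_closedBall_zero_iff.mpr (norm_fderiv_le_of_lipschitzOn ℝ (hxT j) hK)⟩
  have hvlim : Tendsto (fun k => v (φ k)) atTop (𝓝 a) := by
    refine (tendsto_iff_dist_tendsto_zero.mpr (squeeze_zero (fun _ => dist_nonneg)
      (fun j => (mem_ball.mp (hv j)).le.trans (min_le_right _ _)) ?_)).comp hφ.tendsto_atTop
    exact tendsto_one_div_add_atTop_nhds_zero_nat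
  have htlim : Tendsto (fun k => t (φ k)) atTop (𝓝 t₀) := (continuous_fst.tendsto _).comp hlim
  have hAlim : Tendsto (fun k => fderiv ℝ f (x (φ k))) atTop (𝓝 A) :=
    (continuous_snd.tendsto _).comp hlim
  have hAmem : A ∈ clarkeJacobian D f (a + t₀ • (b - a)) :=
    subset_convexHull ℝ _ ⟨fun k => x (φ k), fun k => ⟨hTD (mem_of_mem_nhds (hxT (φ k))),
      hdiff (φ k)⟩, hvlim.add (htlim.smul_const _), hAlim⟩
  refine ⟨a + t₀ • (b - a), ?_, A, hAmem, ?_⟩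
  · rw [segment_eq_image']
    exact mem_image_of_mem _ ht₀A.1
  have hfc {y} (hy : y ∈ segment ℝ a b) : ContinuousAt f y :=
    hK.continuousOn.continuousAt (hT (self_subset_thickening hδ _ hy))
  have hfb : Tendsto (fun k => f (v (φ k) + (b - a))) atTop (𝓝 (f b)) := by
    refine (hfc (right_mem_segment ℝ a b)).tendsto.comp ?_
    simpa using hvlim.add_const (b - a)
  have hfa := (hfc (left_mem_segment ℝ a b)).tendsto.comp hvlim
  have hℓA : Continuous fun B : EuclideanSpace ℝ (Fin n) →L[ℝ] EuclideanSpace ℝ (Fin m) =>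
      ℓ (B (b - a)) := by fun_prop
  exact le_of_tendsto_of_tendsto' ((ℓ.continuous.tendsto _).comp (hfb.sub hfa))
    ((hℓA.tendsto A).comp hAlim) fun k => hle (φ k)

/-- Vector-valued mean value theorem for Clarke's generalized Jacobian. -/
theorem clarkeJacobian_mean_value {n m : ℕ}
    (D : Set (EuclideanSpace ℝ (Fin n))) (hD : IsOpen D) (hDconv : Convex ℝ D)
    (f : EuclideanSpace ℝ (Fin n) → EuclideanSpace ℝ (Fin m))
    (hf : LocallyLipschitzOnSet D f)
    (a b : EuclideanSpace ℝ (Fin n)) (ha : a ∈ D) (hb : b ∈ D) :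
    f b - f a ∈ closure (convexHull ℝ
      {y | ∃ x ∈ segment ℝ a b, ∃ A ∈ clarkeJacobian D f x, A (b - a) = y}) := by
  by_contra hnot
  obtain ⟨ℓ, u, hlt, hgt⟩ :=
    geometric_hahn_banach_closed_point (convex_convexHull ℝ _).closure isClosed_closure hnot
  obtain ⟨x, hx, A, hA, hle⟩ := exists_mem_clarkeJacobian_dual_sub_le hD hDconv hf ha hb ℓ
  have := hlt _ (subset_closure (subset_convexHull ℝ _ ⟨x, hx, A, hA, rfl⟩))
  linarith
end
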